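/- (Theorem 2, second part) For every η ∈ U and every x ∈ S⁺, the partial derivative of φ at η with respect to the coordinate η(x) exists and equals θ_η(x), i.e. ∂φ(η)/∂η(x) = Σ_{s ≤ x} μ(s,x) log p_η(s). -/

import Mathlib

local instance {S : Type*} [PartialOrder S] [DecidableEq S]
    [DecidableRel ((· ≤ ·) : S → S → Prop)] :
    DecidableRel ((· < ·) : S → S → Prop) :=
  fun a b => decidable_of_iff (a ≤ b ∧ a ≠ b) lt_iff_le_and_ne.symm

/-- The extension of `η : ℝ^{S⁺}` to `S` with `η(⊥) = 1`. -/
noncomputable def etaBar {S : Type*} [PartialOrder S] [OrderBot S] [DecidableEq S]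
    (η : {x : S // x ≠ ⊥} → ℝ) (s : S) : ℝ :=
  if h : s = ⊥ then 1 else η ⟨s, h⟩

/-- `p_η(x) = Σ_{s ≥ x} μ(x,s) η(s)`, where `η(⊥) = 1`. -/
noncomputable def pEta {S : Type*} [Fintype S] [PartialOrder S] [OrderBot S] [DecidableEq S]
    [DecidableRel ((· ≤ ·) : S → S → Prop)]
    (mu : S → S → ℤ) (η : {x : S // x ≠ ⊥} → ℝ) (x : S) : ℝ :=
  ∑ s ∈ Finset.univ.filter (fun s => x ≤ s), (mu x s : ℝ) * etaBar η s

/-- `φ(η) = Σ_{x∈S} p_η(x) log p_η(x)`. -/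
noncomputable def phi {S : Type*} [Fintype S] [PartialOrder S] [OrderBot S] [DecidableEq S]
    [DecidableRel ((· ≤ ·) : S → S → Prop)]
    (mu : S → S → ℤ) (η : {x : S // x ≠ ⊥} → ℝ) : ℝ :=
  ∑ x : S, pEta mu η x * Real.log (pEta mu η x)

/-- Partial derivative of a function `f : ℝ^{S⁺} → ℝ` with respect to the coordinate `x`. -/
noncomputable def pd {S : Type*} [Fintype S] [PartialOrder S] [OrderBot S] [DecidableEq S]
    (f : ({x : S // x ≠ ⊥} → ℝ) → ℝ) (x : {x : S // x ≠ ⊥})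
    (η : {x : S // x ≠ ⊥} → ℝ) : ℝ :=
  deriv (fun t => f (Function.update η x t)) (η x)

/-!
Moving `η` along the coordinate `x` moves every `p_η(s)` affinely with slope `μ(s,x)`, so the
chain rule gives `∂φ/∂η(x) = Σ_s μ(s,x) (log p_η(s) + 1)`. The surplus `Σ_s μ(s,x)` vanishes
for `x ≠ ⊥` by the dual Möbius recursion `Σ_{s ≤ x} μ(s,x) = δ(⊥,x)`, which we get from
Mathlib's `IncidenceAlgebra.mu` after checking that the defining recursion pins `μ` down.
-/

open Finset

section Mobius

variable {S : Type*} [Fintype S] [PartialOrder S] [DecidableEq S]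
  [DecidableRel ((· ≤ ·) : S → S → Prop)]

theorem eq_incidenceAlgebra_mu [LocallyFiniteOrder S] (mu : S → S → ℤ)
    (hmu_self : ∀ x : S, mu x x = 1)
    (hmu_lt : ∀ x y : S, x < y →
      mu x y = -∑ s ∈ univ.filter (fun s => x ≤ s ∧ s < y), mu x s)
    (hmu_nle : ∀ x y : S, ¬ x ≤ y → mu x y = 0) (x y : S) :
    mu x y = IncidenceAlgebra.mu ℤ x y := by
  induction y using WellFoundedLT.induction with
  | _ y ih =>
  rcases eq_or_ne x y with rfl | hne
  · simp [hmu_self]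
  by_cases hxy : x ≤ y
  · have hIco : univ.filter (fun s => x ≤ s ∧ s < y) = Ico x y := by ext; simp
    rw [hmu_lt x y (hxy.lt_of_ne hne), IncidenceAlgebra.mu_eq_neg_sum_Ico_of_ne hne, hIco]
    exact congrArg Neg.neg (sum_congr rfl fun s hs => ih s (mem_Ico.1 hs).2)
  · rw [hmu_nle x y hxy, IncidenceAlgebra.apply_eq_zero_of_not_le hxy]

theorem sum_mu_left_eq_zero [OrderBot S] (mu : S → S → ℤ)
    (hmu_self : ∀ x : S, mu x x = 1)
    (hmu_lt : ∀ x y : S, x < y →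
      mu x y = -∑ s ∈ univ.filter (fun s => x ≤ s ∧ s < y), mu x s)
    (hmu_nle : ∀ x y : S, ¬ x ≤ y → mu x y = 0) {x : S} (hx : x ≠ ⊥) :
    ∑ s, mu s x = 0 := by
  let := Fintype.toLocallyFiniteOrder (α := S)
  have hIcc := IncidenceAlgebra.sum_Icc_mu_left (𝕜 := ℤ) ⊥ x
  rw [if_neg hx.symm] at hIcc
  rw [← sum_subset (subset_univ (Icc ⊥ x)) fun s _ hs => hmu_nle s x (by simpa using hs), ← hIcc]
  exact sum_congr rfl fun s _ => eq_incidenceAlgebra_mu mu hmu_self hmu_lt hmu_nle s x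

end Mobius

theorem HasDerivAt.mul_log {f : ℝ → ℝ} {f' a : ℝ} (hf : HasDerivAt f f' a) (ha : f a ≠ 0) :
    HasDerivAt (fun t => f t * Real.log (f t)) (f' * (Real.log (f a) + 1)) a := by
  rw [mul_comm]
  exact (Real.hasDerivAt_mul_log ha).comp a hf

section Entropy

variable {S : Type*} [PartialOrder S] [OrderBot S] [DecidableEq S]

theorem etaBar_update (η : {x : S // x ≠ ⊥} → ℝ) (x : {x : S // x ≠ ⊥}) (t : ℝ) :
    etaBar (Function.update η x t) = Function.update (etaBar η) (x : S) t := by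
  ext s
  by_cases hs : s = ⊥
  · subst hs
    simp [etaBar, x.2.symm]
  · simp [etaBar, hs, Function.update_apply, Subtype.ext_iff]

variable [Fintype S] [DecidableRel ((· ≤ ·) : S → S → Prop)]

theorem hasDerivAt_pEta_update (mu : S → S → ℤ) (hmu_nle : ∀ x y : S, ¬ x ≤ y → mu x y = 0)
    (η : {x : S // x ≠ ⊥} → ℝ) (x : {x : S // x ≠ ⊥}) (s : S) (t : ℝ) :
    HasDerivAt (fun t => pEta mu (Function.update η x t) s) (mu s x) t := by
  have hupdate := hasDerivAt_pi.1 (hasDerivAt_update (etaBar η) (x : S) t)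
  simp only [pEta, etaBar_update]
  refine (HasDerivAt.fun_sum fun u (_ : u ∈ univ.filter (s ≤ ·)) =>
    (hupdate u).const_mul (mu s u : ℝ)).congr_deriv ?_
  by_cases hsx : s ≤ x
  · simp [Pi.single_apply, hsx]
  · simp [Pi.single_apply, hsx, hmu_nle s x hsx]

end Entropy

/-- (Theorem 2, second part) For every `η ∈ U` (i.e. `p_η > 0` everywhere) and `x ∈ S⁺`,
`∂φ(η)/∂η(x)` exists and equals `θ_η(x) = Σ_{s ≤ x} μ(s,x) log p_η(s)`. -/
theorem hasDerivAt_phi {S : Type*} [Fintype S] [PartialOrder S] [OrderBot S]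
    [DecidableEq S] [DecidableRel ((· ≤ ·) : S → S → Prop)]
    (mu : S → S → ℤ)
    (hmu_self : ∀ x : S, mu x x = 1)
    (hmu_lt : ∀ x y : S, x < y →
      mu x y = -∑ s ∈ Finset.univ.filter (fun s => x ≤ s ∧ s < y), mu x s)
    (hmu_nle : ∀ x y : S, ¬ x ≤ y → mu x y = 0)
    (η : {x : S // x ≠ ⊥} → ℝ) (hU : ∀ s : S, 0 < pEta mu η s) (x : {x : S // x ≠ ⊥}) :
    HasDerivAt (fun t => phi mu (Function.update η x t))
      (∑ s ∈ Finset.univ.filter (fun s => s ≤ (x : S)), (mu s (x : S) : ℝ)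
        * Real.log (pEta mu η s))
      (η x) := by
  have hterm (s : S) : HasDerivAt (fun t => pEta mu (Function.update η x t) s
      * Real.log (pEta mu (Function.update η x t) s))
      (mu s x * (Real.log (pEta mu η s) + 1)) (η x) := by
    simpa using (hasDerivAt_pEta_update mu hmu_nle η x s (η x)).mul_log
      (by simpa using (hU s).ne')
  have hsum : ∑ s, (mu s (x : S) : ℝ) = 0 := by
    exact_mod_cast sum_mu_left_eq_zero mu hmu_self hmu_lt hmu_nle x.2
  refine (HasDerivAt.fun_sum fun s (_ : s ∈ univ) => hterm s).congr_deriv ?_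
  rw [sum_filter_of_ne fun s _ hs => ?_]
  · simp [mul_add, sum_add_distrib, hsum]
  · by_contra hsx
    simp [hmu_nle s x hsx] at hs
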